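/- Let (A,C,ψ) be an entwining structure and let t: C ⊗ Ω^n A → k be an n-dimensional closed graded entwined trace on the universal dg-entwining ((Ω^•A, d^•), C, ψ̂). Define g(c, a₀,...,a_n) = t(c ⊗ a₀da₁⋯da_n). Then g satisfies the cyclicity condition g(c, a₁,...,a_{n+1}) = (-1)^n g(c^ψ, a₂,...,a_{n+1}, a_{1ψ}). (Proof idea: t(c ⊗ p₁dp₂...dp_{n+1}) + t(c ⊗ (dp₁)(p₂dp₃...dp_{n+1})) = t(c ⊗ d(p₁p₂)dp₃...dp_{n+1}) = 0 by closedness, and the second term equals (-1)^n t(c^ψ ⊗ p₂dp₃...dp_{n+1}dp_{1ψ}) by the graded entwined trace property.) -/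
import Mathlib


open TensorProduct

/-- An entwining structure `(A, C, ψ)` over a field `k`: a unital `k`-algebra `A`,
a counital `k`-coalgebra `C` and a `k`-linear map `ψ : C ⊗ A → A ⊗ C` satisfying the
entwining axioms of Brzeziński–Majid. -/
structure Entwining (k A C : Type) [Field k] [Ring A] [Algebra k A]
    [AddCommGroup C] [Module k C] [Coalgebra k C] : Type where
  ψ : C ⊗[k] A →ₗ[k] A ⊗[k] C
  mul_compat : ψ ∘ₗ TensorProduct.map (LinearMap.id : C →ₗ[k] C) (LinearMap.mul' k A) =
    TensorProduct.map (LinearMap.mul' k A) (LinearMap.id : C →ₗ[k] C)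
      ∘ₗ (TensorProduct.assoc k A A C).symm.toLinearMap
      ∘ₗ TensorProduct.map (LinearMap.id : A →ₗ[k] A) ψ
      ∘ₗ (TensorProduct.assoc k A C A).toLinearMap
      ∘ₗ TensorProduct.map ψ (LinearMap.id : A →ₗ[k] A)
      ∘ₗ (TensorProduct.assoc k C A A).symm.toLinearMap
  comul_compat : TensorProduct.map (LinearMap.id : A →ₗ[k] A)
        (CoalgebraStruct.comul (R := k) (A := C)) ∘ₗ ψ =
    (TensorProduct.assoc k A C C).toLinearMap
      ∘ₗ TensorProduct.map ψ (LinearMap.id : C →ₗ[k] C)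
      ∘ₗ (TensorProduct.assoc k C A C).symm.toLinearMap
      ∘ₗ TensorProduct.map (LinearMap.id : C →ₗ[k] C) ψ
      ∘ₗ (TensorProduct.assoc k C C A).toLinearMap
      ∘ₗ TensorProduct.map (CoalgebraStruct.comul (R := k) (A := C)) (LinearMap.id : A →ₗ[k] A)
  counit_compat : (TensorProduct.rid k A).toLinearMap
      ∘ₗ TensorProduct.map (LinearMap.id : A →ₗ[k] A)
        (CoalgebraStruct.counit (R := k) (A := C)) ∘ₗ ψ =
    (TensorProduct.lid k A).toLinearMap
      ∘ₗ TensorProduct.map (CoalgebraStruct.counit (R := k) (A := C)) (LinearMap.id : A →ₗ[k] A)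
  unit_compat : ∀ c : C, ψ (c ⊗ₜ[k] (1 : A)) = (1 : A) ⊗ₜ[k] c

variable {k A C : Type}

/-- `IterRep e m c v ι γ β` says that `Σ_{s : ι} (β s) ⊗ (γ s)` is a representation of
the `m`-fold iterated entwining `c^{ψ^m} ⊗ v_{1ψ} ⊗ ⋯ ⊗ v_{mψ}`, obtained by applying
`ψ` successively: first to `(c, v 0)`, then to the resulting coalgebra elements and
`v 1`, and so on. -/
inductive IterRep [Field k] [Ring A] [Algebra k A] [AddCommGroup C] [Module k C]
    [Coalgebra k C] (e : Entwining k A C) :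
    (m : ℕ) → C → (Fin m → A) → (ι : Type) → (ι → C) → (ι → (Fin m → A)) → Prop
  | zero (c : C) :
      IterRep e 0 c Fin.elim0 PUnit (fun _ => c) (fun _ => Fin.elim0)
  | succ {m : ℕ} (c : C) (v : Fin (m + 1) → A) (ι₀ : Type) [Fintype ι₀]
      (α : ι₀ → A) (γ₀ : ι₀ → C)
      (h : e.ψ (c ⊗ₜ[k] v 0) = ∑ i, α i ⊗ₜ[k] γ₀ i)
      (κ : ι₀ → Type) (γ : (i : ι₀) → κ i → C) (β : (i : ι₀) → κ i → (Fin m → A))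
      (hs : ∀ i : ι₀, IterRep e m (γ₀ i) (fun j => v j.succ) (κ i) (γ i) (β i)) :
      IterRep e (m + 1) c v ((i : ι₀) × κ i) (fun p => γ p.1 p.2)
        (fun p => Fin.cons (α p.1) (β p.1 p.2))

/-- `g ∈ ℐ^{m-1}(A,C,ψ)`: the functional `g : C ⊗ A^{⊗m} → k` is invariant, i.e.
`g(c ⊗ a₁ ⊗ ⋯ ⊗ a_m) = g(c^{ψ^m} ⊗ a_{1ψ} ⊗ ⋯ ⊗ a_{mψ})`, stated via arbitrary
representations of the iterated entwining. -/
def EntwInvariant [Field k] [Ring A] [Algebra k A] [AddCommGroup C] [Module k C]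
    [Coalgebra k C] (e : Entwining k A C) {m : ℕ}
    (g : C →ₗ[k] MultilinearMap k (fun _ : Fin m => A) k) : Prop :=
  ∀ (c : C) (v : Fin m → A) (ι : Type) [Fintype ι] (γ : ι → C) (β : ι → (Fin m → A)),
    IterRep e m c v ι γ β → g c v = ∑ s, g (γ s) (β s)

open PiTensorProduct

/-- The multiplication of the universal differential graded algebra `Ω•A` in the model
`Ω^m A = Ã ⊗ A^{⊗m}` (with `Ã = A ⊕ k` the unitalization):
`((p₀+μ)dp₁⋯dp_i) · ((q₀+ν)dq₁⋯dq_j)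
  = (p₀+μ)(dp₁⋯d(p_i q₀)dq₁⋯dq_j + Σ_{l=1}^{i-1} (-1)^{i-l} dp₁⋯d(p_l p_{l+1})⋯dp_i dq₀⋯dq_j)
    + (-1)^i (p₀+μ)p₁ dp₂⋯dp_i dq₀⋯dq_j + ν (p₀+μ)dp₁⋯dp_i dq₁⋯dq_j`,
and `(p₀+μ)·((q₀+ν)dq₁⋯dq_j) = ((p₀+μ)(q₀+ν))dq₁⋯dq_j` when `i = 0`. -/
noncomputable def omul {k A : Type} [Field k] [Ring A] [Algebra k A] {i j n : ℕ}
    (h : i + j = n) (x : Unitization k A) (p : Fin i → A)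
    (y : Unitization k A) (q : Fin j → A) :
    Unitization k A ⊗[k] (⨂[k] (_ : Fin n), A) :=
  if hi : i = 0 then
    (x * y) ⊗ₜ[k] (PiTensorProduct.tprod k)
      (fun s : Fin n => q ⟨s.val, by have := s.isLt; omega⟩)
  else
    x ⊗ₜ[k] (PiTensorProduct.tprod k) (fun s : Fin n =>
        if hs : s.val < i - 1 then p ⟨s.val, by omega⟩
        else if hs' : s.val = i - 1 then p ⟨i - 1, by omega⟩ * y.snd
        else q ⟨s.val - i, by have := s.isLt; omega⟩)
    + (∑ l : Fin (i - 1), ((-1 : k) ^ (i - 1 - l.val)) •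
        (x ⊗ₜ[k] (PiTensorProduct.tprod k) (fun s : Fin n =>
          if hlt : s.val < l.val then p ⟨s.val, by have := l.isLt; omega⟩
          else if hs0 : s.val = l.val then p ⟨l.val, by have := l.isLt; omega⟩ *
            p ⟨l.val + 1, by have := l.isLt; omega⟩
          else if hs : s.val < i - 1 then p ⟨s.val + 1, by omega⟩
          else if hs' : s.val = i - 1 then y.snd
          else q ⟨s.val - i, by have := s.isLt; omega⟩)))
    + ((-1 : k) ^ i) •
        ((Unitization.inr (x.snd * p ⟨0, by omega⟩ + x.fst • p ⟨0, by omega⟩) :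
            Unitization k A) ⊗ₜ[k]
          (PiTensorProduct.tprod k) (fun s : Fin n =>
            if hs : s.val < i - 1 then p ⟨s.val + 1, by omega⟩
            else if hs' : s.val = i - 1 then y.snd
            else q ⟨s.val - i, by have := s.isLt; omega⟩))
    + y.fst • (x ⊗ₜ[k] (PiTensorProduct.tprod k) (fun s : Fin n =>
        if hs : s.val < i then p ⟨s.val, by omega⟩
        else q ⟨s.val - i, by have := s.isLt; omega⟩))


section Aux

variable [Field k] [Ring A] [Algebra k A] [AddCommGroup C] [Module k C] [Coalgebra k C]

lemma iterRep_zero' (e : Entwining k A C) (c : C) (v : Fin 0 → A) :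
    IterRep e 0 c v PUnit (fun _ => c) (fun _ => Fin.elim0) := by
  have hv : v = Fin.elim0 := funext fun j => j.elim0
  rw [hv]; exact IterRep.zero c

lemma iterRep_one (e : Entwining k A C) (c : C) (v : Fin 1 → A) {tn : ℕ}
    (α : Fin tn → A) (γ : Fin tn → C) (h : e.ψ (c ⊗ₜ[k] v 0) = ∑ s, α s ⊗ₜ[k] γ s) :
    IterRep e 1 c v ((s : Fin tn) × PUnit) (fun p => γ p.1)
      (fun p => Fin.cons (α p.1) Fin.elim0) := by
  exact IterRep.succ (e := e) c v (Fin tn) α γ h (fun _ => PUnit)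
    (fun i _ => γ i) (fun i _ => Fin.elim0) (fun i => iterRep_zero' e (γ i) _)

end Aux

/-- Let `t : C ⊗ ΩⁿA → k` be an `n`-dimensional closed graded
entwined trace on the universal dg-entwining structure `((Ω•A, d), C, ψ̂)` (where
`Ω^m A = Ã ⊗ A^{⊗m}`, elements of degree `0` being those of `A ⊆ Ã`): `t` kills exact
forms and satisfies `t(c ⊗ αα') = (-1)^{ij} t(c^{ψ̂} ⊗ α'α_{ψ̂})` for `α ∈ ΩⁱA`,
`α' ∈ ΩʲA`, `i + j = n`, where `ψ̂(c ⊗ (a₀+μ)da₁⋯da_i) =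
(a₀ψ da₁ψ⋯da_iψ) ⊗ c^{ψ^{i+1}} + μ (da₁ψ⋯da_iψ) ⊗ c^{ψ^i}`. Then
`g(c, a₀, …, a_n) := t(c ⊗ a₀da₁⋯da_n)` satisfies the cyclicity condition
`g(c, a₁, …, a_{n+1}) = (-1)ⁿ g(c^ψ, a₂, …, a_{n+1}, a_{1ψ})`. -/
theorem universal_trace_gives_cyclic_cocycle
    {k A C : Type}
    [Field k] [Ring A] [Algebra k A] [AddCommGroup C] [Module k C] [Coalgebra k C]
    (e : Entwining k A C) (n : ℕ)
    (t : C ⊗[k] (Unitization k A ⊗[k] (⨂[k] (_ : Fin n), A)) →ₗ[k] k)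
    (hclosed : ∀ (m : ℕ) (hm : m + 1 = n) (x : Unitization k A) (w : Fin m → A) (c : C),
      t (c ⊗ₜ[k] ((1 : Unitization k A) ⊗ₜ[k] (PiTensorProduct.tprod k)
        (fun s : Fin n => (Fin.cons x.snd w : Fin (m + 1) → A) (Fin.cast (by omega : n = m + 1) s)))) = 0)
    (htrace : ∀ (i j : ℕ) (h : i + j = n) (x y : Unitization k A)
      (p : Fin i → A) (q : Fin j → A),
      (i = 0 → x.fst = 0) → (j = 0 → y.fst = 0) →
      ∀ (c : C)
        (ι₁ : Type) (_ : Fintype ι₁) (γ₁ : ι₁ → C) (β₁ : ι₁ → (Fin (i + 1) → A)),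
        IterRep e (i + 1) c (Fin.cons x.snd p) ι₁ γ₁ β₁ →
      ∀ (ι₂ : Type) (_ : Fintype ι₂) (γ₂ : ι₂ → C) (β₂ : ι₂ → (Fin i → A)),
        IterRep e i c p ι₂ γ₂ β₂ →
      t (c ⊗ₜ[k] omul h x p y q) = (-1 : k) ^ (i * j) *
        ((∑ s : ι₁, t (γ₁ s ⊗ₜ[k]
            omul (by omega : j + i = n) y q (Unitization.inr (β₁ s 0))
              (fun r : Fin i => β₁ s r.succ)))
          + x.fst * ∑ s : ι₂, t (γ₂ s ⊗ₜ[k]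
              omul (by omega : j + i = n) y q (1 : Unitization k A) (β₂ s)))) :
    ∀ (c : C) (v : Fin (n + 1) → A) (tn : ℕ) (α : Fin tn → A) (γ : Fin tn → C),
      e.ψ (c ⊗ₜ[k] v 0) = ∑ s, α s ⊗ₜ[k] γ s →
      t (c ⊗ₜ[k] ((Unitization.inr (v 0) : Unitization k A) ⊗ₜ[k]
          (PiTensorProduct.tprod k) (fun j : Fin n => v j.succ))) =
        (-1 : k) ^ n * ∑ s, t (γ s ⊗ₜ[k]
          ((Unitization.inr
              (Function.update (fun j : Fin (n + 1) => v (j + 1)) (Fin.last n) (α s) 0) :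
            Unitization k A) ⊗ₜ[k]
            (PiTensorProduct.tprod k) (fun j : Fin n =>
              Function.update (fun j' : Fin (n + 1) => v (j' + 1)) (Fin.last n)
                (α s) j.succ))) := by
  intro c v tn α γ hψ
  cases n with
  | zero =>
    have h1 := htrace 0 0 rfl (Unitization.inr (v 0)) (Unitization.inr 1)
      Fin.elim0 Fin.elim0 (fun _ => by simp) (fun _ => by simp) c
      ((s : Fin tn) × PUnit) inferInstance _ _
      (iterRep_one e c (Fin.cons ((Unitization.inr (v 0) : Unitization k A)).snd Fin.elim0) α γ
        (by simpa using hψ))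
      PUnit inferInstance _ _ (iterRep_zero' e c Fin.elim0)
    simp only [omul, ↓reduceDIte, Unitization.fst_inr] at h1
    have hfz : ∀ f : Fin 0 → A, f = Fin.elim0 := fun f => funext fun j => j.elim0
    rw [← Finset.univ_sigma_univ, Finset.sum_sigma] at h1
    simp only [← Unitization.inr_mul, mul_one, one_mul, Fin.cons_zero, pow_zero,
      zero_mul, add_zero, Finset.univ_unique, Finset.sum_singleton] at h1
    simp only [pow_zero, one_mul, show (Fin.last 0) = 0 from rfl, Function.update_self]
    rw [hfz (fun j : Fin 0 => v j.succ)] at *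
    simp only [hfz] at h1 ⊢
    exact h1
  | succ m =>
    have h1 := htrace 0 (m+1) (by omega) (Unitization.inr (v 0)) 1
      Fin.elim0 (fun j => v j.succ) (fun _ => by simp) (fun hj => absurd hj (by omega)) c
      ((s : Fin tn) × PUnit) inferInstance _ _
      (iterRep_one e c (Fin.cons ((Unitization.inr (v 0) : Unitization k A)).snd Fin.elim0) α γ
        (by simpa using hψ))
      PUnit inferInstance _ _ (iterRep_zero' e c Fin.elim0)
    simp only [omul, ↓reduceDIte, Unitization.fst_inr, Unitization.snd_inr, Unitization.fst_one,
      Unitization.snd_one, Fin.cons_zero, zero_mul, add_zero, mul_zero, zero_add, one_smul,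
      pow_zero, one_mul, mul_one, zero_smul, smul_zero] at h1
    have hexact : ∀ (c' : C) (u : Fin (m+1) → A),
        t (c' ⊗ₜ[k] ((1 : Unitization k A) ⊗ₜ[k] (PiTensorProduct.tprod k) u)) = 0 := by
      intro c' u
      have h0 := hclosed m rfl (Unitization.inr (u 0)) (fun j => u j.succ) c'
      have hu : (fun s : Fin (m+1) => (Fin.cons ((Unitization.inr (u 0) : Unitization k A)).snd
          (fun j => u j.succ) : Fin (m+1) → A) (Fin.cast (by omega) s)) = u := by
        funext s
        rw [show ((Unitization.inr (u 0) : Unitization k A)).snd = u 0 from rfl]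
        rw [show (fun j => u j.succ) = Fin.tail u from rfl, Fin.cons_self_tail]
        rfl
      rw [hu] at h0
      exact h0
    simp only [dif_neg (Nat.succ_ne_zero m), Nat.add_sub_cancel] at h1
    simp only [tmul_add, map_add, tmul_sum, tmul_smul, map_sum, map_smul, hexact,
      smul_zero, mul_zero, Finset.sum_const_zero, zero_add, add_zero, smul_eq_mul] at h1
    rw [← Finset.univ_sigma_univ, Finset.sum_sigma] at h1
    simp only [Finset.univ_unique, Finset.sum_singleton] at h1
    refine h1.trans ?_
    rw [Finset.mul_sum]
    refine Finset.sum_congr rfl fun s _ => ?_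
    congr 3
    refine congrArg₂ (fun (x : Unitization k A) (y : ⨂[k] (_ : Fin (m+1)), A) => x ⊗ₜ[k] y) ?_ ?_
    · rw [Function.update_of_ne (Fin.ne_of_val_ne (by simp))]
      refine congrArg _ (congrArg v (Fin.ext ?_))
      simp only [Fin.add_def, Fin.val_succ, Fin.val_zero, zero_add]
      exact (Nat.mod_eq_of_lt (by omega)).symm
    · congr 1
      funext j
      rcases Nat.lt_or_ge (j : ℕ) m with hj | hj
      · rw [dif_pos hj, Function.update_of_ne (Fin.ne_of_val_ne (by simp; omega))]
        refine congrArg v (Fin.ext ?_)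
        simp only [Fin.add_def, Fin.val_succ, Fin.val_zero, zero_add]
        exact (Nat.mod_eq_of_lt (by omega)).symm
      · have hj' : (j : ℕ) = m := by omega
        rw [dif_neg (by omega), dif_pos hj',
          show j.succ = Fin.last (m+1) from Fin.ext (by simp [Fin.val_succ, hj']),
          Function.update_self]
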